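/- Given reals ρ₀ ≠ 0 and ρ₁, ρ₂, …, set x_r := −(2r+1)!!·ρ_r/((r+1)·ρ₀), and for integers B ≥ 3 and 0 ≤ M ≤ B−3 define γ^M_B := ρ₀^{−(B−3)}·Σ_{K=0}^{B−3−M} ((B−3+K)!/((B−3−M)!·M!))·B_{B−3−M,K}(x₁,…,x_{B−2−M−K}); set γ^M_B := 0 when M < 0 or M > B−3. Then for every B ≥ 4 and every 0 ≤ M ≤ B−3: Σ_{j=0}^{B−3−M} C(M+j, j)·(2j+1)!!·ρ_j·γ^{M+j}_B = γ^{M−1}_{B−1}, where C(·,·) is the binomial coefficient and (2j+1)!! := (2j+1)!/(2^j·j!). -/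

import Mathlib

/-- The partial Bell polynomial `B_{n,k}(x₁,…,x_{n−k+1})`, defined by the explicit sum
`Σ n!/(j₁!⋯j_{n−k+1}!)·∏ᵢ(xᵢ/i!)^{jᵢ}` over nonnegative integers `j₁,…,j_{n−k+1}` with
`j₁+⋯+j_{n−k+1} = k` and `1j₁+2j₂+⋯+(n−k+1)j_{n−k+1} = n`. -/
noncomputable def bellPoly (n k : ℕ) (x : ℕ → ℝ) : ℝ :=
  ∑ j ∈ (Finset.Nat.antidiagonalTuple (n - k + 1) k).filter
      (fun j : Fin (n - k + 1) → ℕ => ∑ i : Fin (n - k + 1), ((i : ℕ) + 1) * j i = n),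
    (n.factorial : ℝ) / (∏ i : Fin (n - k + 1), ((j i).factorial : ℝ)) *
      ∏ i : Fin (n - k + 1), (x ((i : ℕ) + 1) / (((i : ℕ) + 1).factorial : ℝ)) ^ (j i)

/-- The odd double factorial `(2j+1)!! = (2j+1)!/(2^j·j!)` as a real number. -/
noncomputable def df (j : ℕ) : ℝ := ((2 * j + 1).factorial : ℝ) / (2 ^ j * (j.factorial : ℝ))

/-- The coefficients `γ^M_B` built from a sequence `ρ₀, ρ₁, …`:
`γ^M_B = ρ₀^{−(B−3)}·Σ_{K=0}^{B−3−M} ((B−3+K)!/((B−3−M)!·M!))·B_{B−3−M,K}(x₁,…)` with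
`x_r = −(2r+1)!!·ρ_r/((r+1)·ρ₀)`, for `B ≥ 3` and `0 ≤ M ≤ B−3`, and `γ^M_B = 0`
for `M` out of this range. -/
noncomputable def gam (ρs : ℕ → ℝ) (B : ℕ) (M : ℤ) : ℝ :=
  if 3 ≤ B ∧ 0 ≤ M ∧ M ≤ (B : ℤ) - 3 then
    (ρs 0 ^ (B - 3))⁻¹ *
      ∑ K ∈ Finset.range (B - 3 - M.toNat + 1),
        ((B - 3 + K).factorial : ℝ) /
            (((B - 3 - M.toNat).factorial : ℝ) * (M.toNat.factorial : ℝ)) *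
          bellPoly (B - 3 - M.toNat) K (fun r => -(df r * ρs r) / ((r + 1) * ρs 0))
  else 0

/-!
Put `φ(t) = Σ_{i ≥ 1} x_i tⁱ / i!`. The multinomial theorem gives
`K! · B_{N,K}(x) = N! · [t^N] φ^K`, and substituting `φ` into the binomial series
`Σ_K C(n+K, K) y^K = (1 - y)^{-(n+1)}` turns the definition of `γ` into
`γ^M_{n+3} = ρ₀^{-n} (n!/M!) [t^{n-M}] (1 - φ)^{-(n+1)}`.

Because `x₀ = -1`, the series `Σ_j (2j+1)!! ρ_j t^j / j!` equals `ρ₀ (1 - φ - t φ')`, and the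
left-hand side becomes a multiple of the coefficient of `t^{n-M}` in
`(1 - φ - t φ') (1 - φ)^{-(n+1)} = (1 - φ)^{-n} - (t/n) d/dt (1 - φ)^{-n}`.
As `t d/dt` multiplies the coefficient of `t^m` by `m`, this coefficient is
`(M/n) [t^{n-M}] (1 - φ)^{-n}`, which is the coefficient defining `γ^{M-1}_{n+2}`.
-/

open PowerSeries Finset
open scoped Nat

namespace PowerSeries

section CommSemiring

variable {R : Type*} [CommSemiring R]

theorem coeff_X_mul_derivative (g : R⟦X⟧) (m : ℕ) :
    coeff m (X * d⁄dX R g) = m * coeff m g := by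
  cases m with
  | zero => simp
  | succ m =>
    rw [coeff_succ_X_mul, coeff_derivative, mul_comm]
    push_cast
    ring

theorem coeff_pow_eq_zero_of_lt {f : R⟦X⟧} (hf : constantCoeff f = 0) {d K : ℕ} (h : d < K) :
    coeff d (f ^ K) = 0 :=
  X_pow_dvd_iff.mp (pow_dvd_pow_of_dvd (X_dvd_iff.mpr hf) K) d h

end CommSemiring

section CommRing

variable {R : Type*} [CommRing R]

theorem coeff_X_mul_pow_eq_of_X_pow_dvd_sub {f g : R⟦X⟧} {a : ℕ} (h : X ^ a ∣ f - g) (k : ℕ)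
    {d : ℕ} (hd : d < k + a) : coeff d ((X * f) ^ k) = coeff d ((X * g) ^ k) := by
  have hdvd : X ^ (k + a) ∣ (X * f) ^ k - (X * g) ^ k := by
    rw [mul_pow, mul_pow, ← mul_sub, pow_add]
    exact mul_dvd_mul_left _ (h.trans (sub_dvd_pow_sub_pow f g k))
  exact sub_eq_zero.mp (by rw [← map_sub]; exact X_pow_dvd_iff.mp hdvd d hd)

theorem coeff_sum_monomial_pow {ι : Type*} [DecidableEq ι] (s : Finset ι) (e : ι → ℕ)
    (c : ι → R) (k n : ℕ) :
    coeff n ((∑ i ∈ s, monomial (e i) (c i)) ^ k) =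
      ∑ j ∈ (s.piAntidiag k).filter (fun j => ∑ i ∈ s, e i * j i = n),
        (Nat.multinomial s j : R) * ∏ i ∈ s, c i ^ j i := by
  simp only [sum_pow_eq_sum_piAntidiag, monomial_pow, prod_monomial, map_sum, sum_filter]
  refine sum_congr rfl fun j _ => ?_
  rw [← map_natCast (C (R := R)), ← monomial_zero_eq_C_apply, monomial_mul_monomial,
    coeff_monomial]
  simp only [zero_add, mul_comm (j _)]
  split_ifs <;> simp_all

end CommRing

section Field

variable {k : Type*} [Field k]

theorem inv_one_sub_pow_eq_subst {f : k⟦X⟧} (hf : constantCoeff f = 0) (n : ℕ) :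
    (1 - f)⁻¹ ^ (n + 1) = (invOneSubPow k (n + 1)).val.subst f := by
  have hs : HasSubst f := HasSubst.of_constantCoeff_zero' hf
  have hS : (invOneSubPow k (n + 1)).val.subst f * (1 - f) ^ (n + 1) = 1 := by
    have := congrArg (substAlgHom (R := k) hs) (invOneSubPow k (n + 1)).val_inv
    rwa [invOneSubPow_inv_eq_one_sub_pow, map_mul, map_pow, map_sub, map_one, substAlgHom_X,
      coe_substAlgHom] at this
  have hw : (1 - f) * (1 - f)⁻¹ = 1 := PowerSeries.mul_inv_cancel _ (by simp [hf])
  calc (1 - f)⁻¹ ^ (n + 1)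
      = ((invOneSubPow k (n + 1)).val.subst f * (1 - f) ^ (n + 1)) * (1 - f)⁻¹ ^ (n + 1) := by
        rw [hS, one_mul]
    _ = (invOneSubPow k (n + 1)).val.subst f * ((1 - f) * (1 - f)⁻¹) ^ (n + 1) := by
        rw [mul_assoc, ← mul_pow]
    _ = _ := by rw [hw, one_pow, mul_one]

theorem coeff_inv_one_sub_pow {f : k⟦X⟧} (hf : constantCoeff f = 0) (n d : ℕ) :
    coeff d ((1 - f)⁻¹ ^ (n + 1)) =
      ∑ K ∈ range (d + 1), ((n + K).choose n : k) * coeff d (f ^ K) := by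
  rw [inv_one_sub_pow_eq_subst hf, coeff_subst' (HasSubst.of_constantCoeff_zero' hf)]
  refine (finsum_eq_sum_of_support_subset (s := range (d + 1)) _ fun K hK => ?_).trans ?_
  · by_contra hKd
    simp only [coe_range, Set.mem_Iio, not_lt] at hKd
    exact hK (by simp only [coeff_pow_eq_zero_of_lt hf (by omega : d < K), smul_zero])
  · simp [invOneSubPow_val_succ_eq_mk_add_choose]

theorem derivative_inv_one_sub_pow (f : k⟦X⟧) (n : ℕ) :
    d⁄dX k ((1 - f)⁻¹ ^ n) = n * (1 - f)⁻¹ ^ (n + 1) * d⁄dX k f := by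
  rcases n with _ | n
  · simp
  · rw [derivative_pow, derivative_inv', map_sub, derivative_one]
    push_cast
    ring

theorem natCast_mul_coeff_one_sub_sub_X_mul_derivative_mul {f : k⟦X⟧} (hf : constantCoeff f = 0)
    (n m : ℕ) :
    (n : k) * coeff m ((1 - f - X * d⁄dX k f) * (1 - f)⁻¹ ^ (n + 1)) =
      ((n : k) - m) * coeff m ((1 - f)⁻¹ ^ n) := by
  have key : C (n : k) * ((1 - f - X * d⁄dX k f) * (1 - f)⁻¹ ^ (n + 1)) =
      C (n : k) * (1 - f)⁻¹ ^ n - X * d⁄dX k ((1 - f)⁻¹ ^ n) := by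
    have hw : (1 - f) * (1 - f)⁻¹ = 1 := PowerSeries.mul_inv_cancel _ (by simp [hf])
    rw [derivative_inv_one_sub_pow, map_natCast]
    set w := (1 - f)⁻¹
    linear_combination (n * w ^ n) * hw
  rw [← coeff_C_mul, key, map_sub, coeff_C_mul, coeff_X_mul_derivative]
  ring

end Field

end PowerSeries

noncomputable def bellEGF (x : ℕ → ℝ) : ℝ⟦X⟧ :=
  X * PowerSeries.mk fun i => x (i + 1) / (i + 1)!

theorem constantCoeff_bellEGF (x : ℕ → ℝ) : constantCoeff (bellEGF x) = 0 := by
  simp [bellEGF]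

theorem coeff_succ_bellEGF (x : ℕ → ℝ) (d : ℕ) :
    coeff (d + 1) (bellEGF x) = x (d + 1) / (d + 1)! := by
  rw [bellEGF, coeff_succ_X_mul, coeff_mk]

theorem factorial_mul_bellPoly (n k : ℕ) (x : ℕ → ℝ) :
    (k ! : ℝ) * bellPoly n k x = n ! * coeff n (bellEGF x ^ k) := by
  set a := n - k + 1
  set c : ℕ → ℝ := fun i => x (i + 1) / (i + 1)!
  -- Each factor of `φ ^ k` has order at least one, so only `x₁, …, x_a` reach `[tⁿ] φ ^ k`.
  have htrunc : X ^ a ∣ PowerSeries.mk c - ∑ i : Fin a, monomial (i : ℕ) (c i) := by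
    refine X_pow_dvd_iff.mpr fun d hd => ?_
    rw [map_sub, map_sum, coeff_mk, Fin.sum_univ_eq_sum_range (fun i => coeff d (monomial i (c i)))]
    simp [coeff_monomial, hd]
  rw [bellEGF, coeff_X_mul_pow_eq_of_X_pow_dvd_sub htrunc k (by omega), mul_sum]
  simp_rw [X_eq, monomial_mul_monomial, one_mul, add_comm 1]
  rw [coeff_sum_monomial_pow, piAntidiag_univ_fin_eq_antidiagonalTuple, bellPoly, mul_sum,
    mul_sum]
  refine sum_congr rfl fun j hj => ?_
  have hk : ∑ i, j i = k := Nat.mem_antidiagonalTuple.mp (mem_filter.mp hj).1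
  have hspec : ((∏ i, (j i)! : ℕ) : ℝ) * Nat.multinomial univ j = k ! := by
    exact_mod_cast hk ▸ Nat.multinomial_spec univ j
  have hne : ((∏ i, (j i)! : ℕ) : ℝ) ≠ 0 := by positivity
  push_cast at hspec hne
  rw [← hspec]
  field_simp
  rfl

noncomputable def xSeq (ρs : ℕ → ℝ) (r : ℕ) : ℝ := -(df r * ρs r) / ((r + 1) * ρs 0)

noncomputable def gamGen (ρs : ℕ → ℝ) : ℝ⟦X⟧ := (1 - bellEGF (xSeq ρs))⁻¹

theorem gam_add_three (ρs : ℕ → ℝ) {n M : ℕ} (hM : M ≤ n) :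
    gam ρs (n + 3) M = (ρs 0 ^ n)⁻¹ * (n ! / M !) * coeff (n - M) (gamGen ρs ^ (n + 1)) := by
  rw [gam, if_pos (by omega), gamGen, coeff_inv_one_sub_pow (constantCoeff_bellEGF _), mul_sum,
    mul_sum]
  simp only [Int.toNat_natCast, Nat.add_sub_cancel]
  change ∑ K ∈ _, _ * (_ * bellPoly _ K (xSeq ρs)) = _
  refine sum_congr rfl fun K _ => ?_
  have hbell := factorial_mul_bellPoly (n - M) K (xSeq ρs)
  rw [Nat.cast_add_choose]
  field_simp
  rw [mul_comm, hbell]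

theorem mk_df_mul_div_factorial {ρs : ℕ → ℝ} (hρ : ρs 0 ≠ 0) :
    PowerSeries.mk (fun j => df j * ρs j / j !) =
      C (ρs 0) * (1 - bellEGF (xSeq ρs) - X * d⁄dX ℝ (bellEGF (xSeq ρs))) := by
  ext d
  rw [coeff_mk, coeff_C_mul, map_sub, map_sub, coeff_X_mul_derivative]
  rcases d with _ | d
  · simp [df, constantCoeff_bellEGF]
  · rw [coeff_succ_bellEGF, coeff_one, if_neg d.succ_ne_zero, xSeq]
    field_simp
    push_cast
    ring

theorem sum_choose_mul_df_mul_gam (ρs : ℕ → ℝ) {n M : ℕ} (hM : M ≤ n) :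
    ∑ j ∈ range (n - M + 1), ((M + j).choose j : ℝ) * df j * ρs j * gam ρs (n + 3) (M + j) =
      (ρs 0 ^ n)⁻¹ * (n ! / M !) *
        coeff (n - M) (PowerSeries.mk (fun j => df j * ρs j / j !) * gamGen ρs ^ (n + 1)) := by
  rw [coeff_mul, Nat.sum_antidiagonal_eq_sum_range_succ_mk, mul_sum]
  refine sum_congr rfl fun j hj => ?_
  have hj : M + j ≤ n := by simp only [mem_range] at hj; omega
  rw [← Nat.cast_add, gam_add_three ρs hj, coeff_mk, Nat.sub_sub, ← Nat.choose_symm_add,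
    Nat.cast_add_choose]
  field_simp

theorem stmt_12 (ρs : ℕ → ℝ) (hρ : ρs 0 ≠ 0) (B M : ℕ) (hB : 4 ≤ B) (hM : M ≤ B - 3) :
    ∑ j ∈ Finset.range (B - 3 - M + 1),
      (((M + j).choose j : ℕ) : ℝ) * df j * ρs j * gam ρs B ((M : ℤ) + j)
    = gam ρs (B - 1) ((M : ℤ) - 1) := by
  obtain ⟨n, rfl⟩ : ∃ n, B = n + 4 := ⟨B - 4, by omega⟩
  have hcoeff := natCast_mul_coeff_one_sub_sub_X_mul_derivative_mul
    (constantCoeff_bellEGF (xSeq ρs)) (n + 1) (n + 1 - M)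
  rw [← gamGen] at hcoeff
  rw [show n + 4 - 3 = n + 1 by omega] at hM ⊢
  rw [sum_choose_mul_df_mul_gam ρs hM, mk_df_mul_div_factorial hρ, mul_assoc (C _), coeff_C_mul,
    show n + 4 - 1 = n + 3 by omega]
  rcases M with _ | M
  · rw [gam, if_neg (by omega)]
    push_cast at hcoeff
    simp [show (n : ℝ) + 1 ≠ 0 by positivity] at hcoeff
    simp [hcoeff]
  · rw [show ((M + 1 : ℕ) : ℤ) - 1 = (M : ℕ) by push_cast; ring, gam_add_three ρs (by omega),
      show n + 1 - (M + 1) = n - M by omega, Nat.factorial_succ, Nat.factorial_succ] at *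
    rw [Nat.cast_sub (by omega)] at hcoeff
    push_cast at hcoeff ⊢
    field_simp
    linear_combination ρs 0 ^ (n + 1) * hcoeff
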